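/- arXiv:math/0010175 — 3 statements merged into one kernel-verified Lean document; each statement's English description precedes it below -/
import Mathlib

section
/- Let n ≥ 3, let f₁,…,fₙ : ℝ → ℝ be C² functions, and let F(x) = (f₁(x₁) + … + fₙ(xₙ))/(x₁ + … + xₙ) on the set where s := x₁ + … + xₙ ≠ 0. Then for any three pairwise distinct indices a, b, p ∈ {1,…,n} and any point x with s ≠ 0, the following exact identity holds: F_{pa}(x)·F_b(x) − F_{pb}(x)·F_a(x) = (f_a′(x_a) − f_b′(x_b)) · (f_p′(x_p)·s − (f₁(x₁) + … + fₙ(xₙ))) / s⁴, where F_i denotes ∂F/∂x_i and F_{pi} denotes ∂²F/∂x_p∂x_i. In particular, the reducibility equation F_{pa}/F_{pb} = F_a/F_b holds at x (in the form F_{pa}F_b = F_{pb}F_a) if and only if (f_a′(x_a) − f_b′(x_b)) · (f_p′(x_p)(x₁ + … + xₙ) − (f₁(x₁) + … + fₙ(xₙ))) = 0. -/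
/-!
Writing `s = ∑ xᵢ` and `N = ∑ fᵢ(xᵢ)`, the quotient rule gives
`F_j = (f_j'(x_j)·s − N)/s²`. For `j ≠ p` the factor `f_j'(x_j)` does not depend on `x_p`,
so no second derivative of any `fᵢ` survives in
`F_{pj} = ((f_j'(x_j) − f_p'(x_p))·s − 2(f_j'(x_j)·s − N))/s³`, and the combination
`F_{pa}F_b − F_{pb}F_a` collapses to `(f_a' − f_b')(f_p'·s − N)/s⁴` by clearing denominators.
-/

open ContinuousLinearMap

theorem fderiv_div_apply {𝕜 E : Type*} [NontriviallyNormedField 𝕜] [NormedAddCommGroup E]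
    [NormedSpace 𝕜 E] {u v : E → 𝕜} {u' v' : E →L[𝕜] 𝕜} {y : E}
    (hu : HasFDerivAt u u' y) (hv : HasFDerivAt v v' y) (hy : v y ≠ 0) (w : E) :
    fderiv 𝕜 (fun z => u z / v z) y w = (u' w * v y - u y * v' w) / v y ^ 2 := by
  have hquot :
      HasFDerivAt (fun z => u z / v z) (u y • (-(v y ^ 2)⁻¹ • v') + (v y)⁻¹ • u') y := by
    simpa only [div_eq_mul_inv, Function.comp_def] using
      hu.fun_mul ((hasDerivAt_inv hy).comp_hasFDerivAt y hv)
  rw [hquot.fderiv]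
  simp only [add_apply, smul_apply, smul_eq_mul]
  field_simp
  ring

section

variable {ι : Type*} [Fintype ι]

theorem hasFDerivAt_comp_apply {g : ℝ → ℝ} {y : ι → ℝ} {j : ι}
    (hg : DifferentiableAt ℝ g (y j)) :
    HasFDerivAt (fun z : ι → ℝ => g (z j))
      (deriv g (y j) • (proj j : (ι → ℝ) →L[ℝ] ℝ)) y :=
  hg.hasDerivAt.comp_hasFDerivAt y (hasFDerivAt_apply j y)

theorem hasFDerivAt_sum_comp_apply {g : ι → ℝ → ℝ} {y : ι → ℝ}
    (hg : ∀ i, DifferentiableAt ℝ (g i) (y i)) :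
    HasFDerivAt (fun z => ∑ i, g i (z i))
      (∑ i, deriv (g i) (y i) • (proj i : (ι → ℝ) →L[ℝ] ℝ)) y :=
  HasFDerivAt.fun_sum fun i _ => hasFDerivAt_comp_apply (hg i)

theorem hasFDerivAt_sum_apply (y : ι → ℝ) :
    HasFDerivAt (fun z : ι → ℝ => ∑ i, z i) (∑ i, (proj i : (ι → ℝ) →L[ℝ] ℝ)) y :=
  HasFDerivAt.fun_sum fun i _ => hasFDerivAt_apply i y

noncomputable def sumRatio (f : ι → ℝ → ℝ) (z : ι → ℝ) : ℝ :=
  (∑ i, f i (z i)) / ∑ i, z i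

variable [DecidableEq ι]

theorem fderiv_sumRatio_single {f : ι → ℝ → ℝ} {y : ι → ℝ}
    (hf : ∀ i, DifferentiableAt ℝ (f i) (y i)) (hy : ∑ i, y i ≠ 0) (j : ι) :
    fderiv ℝ (sumRatio f) y (Pi.single j 1) =
      (deriv (f j) (y j) * ∑ i, y i - ∑ i, f i (y i)) / (∑ i, y i) ^ 2 := by
  unfold sumRatio
  rw [fderiv_div_apply (hasFDerivAt_sum_comp_apply hf) (hasFDerivAt_sum_apply y) hy]
  simp [Pi.single_apply]

theorem fderiv_fderiv_sumRatio_single {f : ι → ℝ → ℝ} {x : ι → ℝ}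
    (hf : ∀ i, Differentiable ℝ (f i)) {j : ι}
    (hf' : DifferentiableAt ℝ (deriv (f j)) (x j))
    (hx : ∑ i, x i ≠ 0) {p : ι} (hjp : j ≠ p) :
    fderiv ℝ (fun y => fderiv ℝ (sumRatio f) y (Pi.single j 1)) x (Pi.single p 1) =
      ((deriv (f j) (x j) - deriv (f p) (x p)) * ∑ i, x i
        - 2 * (deriv (f j) (x j) * ∑ i, x i - ∑ i, f i (x i))) / (∑ i, x i) ^ 3 := by
  have hnear : ∀ᶠ y in nhds x, ∑ i, y i ≠ 0 :=
    (continuous_finsetSum _ fun i _ => continuous_apply i).continuousAt.eventually_ne hx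
  rw [Filter.EventuallyEq.fderiv_eq (hnear.mono fun y hy =>
    fderiv_sumRatio_single (fun i => hf i (y i)) hy j)]
  have hS := hasFDerivAt_sum_apply x
  have hnum : HasFDerivAt (fun y => deriv (f j) (y j) * ∑ i, y i - ∑ i, f i (y i)) _ x :=
    ((hasFDerivAt_comp_apply hf').fun_mul hS).fun_sub
      (hasFDerivAt_sum_comp_apply fun i => hf i (x i))
  rw [fderiv_div_apply hnum (hS.pow 2) (pow_ne_zero 2 hx)]
  simp only [sub_apply, add_apply, smul_apply, sum_apply, proj_apply, Pi.single_apply,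
    Finset.sum_ite_eq', Finset.mem_univ, if_true, smul_eq_mul, mul_one, hjp, if_false,
    mul_zero, add_zero, mul_ite, nsmul_eq_mul, Nat.add_one_sub_one, pow_one,
    Nat.cast_ofNat]
  field_simp

theorem fderiv_sumRatio_cross {f : ι → ℝ → ℝ} (hf : ∀ i, ContDiff ℝ 2 (f i)) {a b p : ι}
    (hap : a ≠ p) (hbp : b ≠ p) {x : ι → ℝ} (hx : ∑ i, x i ≠ 0) :
    fderiv ℝ (fun y => fderiv ℝ (sumRatio f) y (Pi.single a 1)) x (Pi.single p 1) *
          fderiv ℝ (sumRatio f) x (Pi.single b 1) -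
        fderiv ℝ (fun y => fderiv ℝ (sumRatio f) y (Pi.single b 1)) x (Pi.single p 1) *
          fderiv ℝ (sumRatio f) x (Pi.single a 1) =
      (deriv (f a) (x a) - deriv (f b) (x b)) *
        (deriv (f p) (x p) * (∑ i, x i) - (∑ i, f i (x i))) / (∑ i, x i) ^ 4 := by
  have hdiff : ∀ i, Differentiable ℝ (f i) := fun i => (hf i).differentiable (by norm_num)
  rw [fderiv_fderiv_sumRatio_single hdiff ((hf a).differentiable_deriv_two _) hx hap,
    fderiv_fderiv_sumRatio_single hdiff ((hf b).differentiable_deriv_two _) hx hbp,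
    fderiv_sumRatio_single (fun i => hdiff i _) hx,
    fderiv_sumRatio_single (fun i => hdiff i _) hx]
  field_simp
  ring

end

theorem stmt_3_general (n : ℕ)
    (f : Fin n → ℝ → ℝ) (hf : ∀ i, ContDiff ℝ 2 (f i))
    (F : (Fin n → ℝ) → ℝ)
    (hF : ∀ x, F x = (∑ i, f i (x i)) / (∑ i, x i))
    (a b p : Fin n) (hap : a ≠ p) (hbp : b ≠ p)
    (x : Fin n → ℝ) (hs : (∑ i, x i) ≠ 0) :
    (fderiv ℝ (fun y => fderiv ℝ F y (Pi.single a 1)) x (Pi.single p 1) *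
          fderiv ℝ F x (Pi.single b 1) -
        fderiv ℝ (fun y => fderiv ℝ F y (Pi.single b 1)) x (Pi.single p 1) *
          fderiv ℝ F x (Pi.single a 1) =
      (deriv (f a) (x a) - deriv (f b) (x b)) *
        (deriv (f p) (x p) * (∑ i, x i) - (∑ i, f i (x i))) / (∑ i, x i) ^ 4) ∧
    ((fderiv ℝ (fun y => fderiv ℝ F y (Pi.single a 1)) x (Pi.single p 1) *
          fderiv ℝ F x (Pi.single b 1) =
        fderiv ℝ (fun y => fderiv ℝ F y (Pi.single b 1)) x (Pi.single p 1) *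
          fderiv ℝ F x (Pi.single a 1)) ↔
      (deriv (f a) (x a) - deriv (f b) (x b)) *
        (deriv (f p) (x p) * (∑ i, x i) - (∑ i, f i (x i))) = 0) := by
  obtain rfl : F = sumRatio f := funext hF
  have hcross := fderiv_sumRatio_cross hf hap hbp hs
  refine ⟨hcross, ?_⟩
  rw [← sub_eq_zero, hcross, div_eq_zero_iff]
  simp [hs]

/-- For `F(x) = (f₁(x₁) + … + fₙ(xₙ))/(x₁ + … + xₙ)` and pairwise
distinct indices `a, b, p`, at every point with `s = x₁ + … + xₙ ≠ 0` one has the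
exact identity
`F_{pa}·F_b − F_{pb}·F_a = (f_a′(x_a) − f_b′(x_b))·(f_p′(x_p)·s − Σfᵢ(xᵢ))/s⁴`;
in particular the reducibility equation `F_{pa}·F_b = F_{pb}·F_a` holds at `x`
iff `(f_a′(x_a) − f_b′(x_b))·(f_p′(x_p)·s − Σfᵢ(xᵢ)) = 0`. -/
theorem stmt_3 (n : ℕ) (hn : 3 ≤ n)
    (f : Fin n → ℝ → ℝ) (hf : ∀ i, ContDiff ℝ 2 (f i))
    (F : (Fin n → ℝ) → ℝ)
    (hF : ∀ x, F x = (∑ i, f i (x i)) / (∑ i, x i))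
    (a b p : Fin n) (hab : a ≠ b) (hap : a ≠ p) (hbp : b ≠ p)
    (x : Fin n → ℝ) (hs : (∑ i, x i) ≠ 0) :
    (fderiv ℝ (fun y => fderiv ℝ F y (Pi.single a 1)) x (Pi.single p 1) *
          fderiv ℝ F x (Pi.single b 1) -
        fderiv ℝ (fun y => fderiv ℝ F y (Pi.single b 1)) x (Pi.single p 1) *
          fderiv ℝ F x (Pi.single a 1) =
      (deriv (f a) (x a) - deriv (f b) (x b)) *
        (deriv (f p) (x p) * (∑ i, x i) - (∑ i, f i (x i))) / (∑ i, x i) ^ 4) ∧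
    ((fderiv ℝ (fun y => fderiv ℝ F y (Pi.single a 1)) x (Pi.single p 1) *
          fderiv ℝ F x (Pi.single b 1) =
        fderiv ℝ (fun y => fderiv ℝ F y (Pi.single b 1)) x (Pi.single p 1) *
          fderiv ℝ F x (Pi.single a 1)) ↔
      (deriv (f a) (x a) - deriv (f b) (x b)) *
        (deriv (f p) (x p) * (∑ i, x i) - (∑ i, f i (x i))) = 0) :=
  stmt_3_general n f hf F hF a b p hap hbp x hs
end

section
/- Let n ≥ 2, let f₁,…,fₙ : ℝ → ℝ be C¹ functions, let U ⊆ ℝⁿ be a nonempty connected open set on which x₁ + … + xₙ ≠ 0, and let F(x) = (f₁(x₁) + … + fₙ(xₙ))/(x₁ + … + xₙ). If for some fixed index p the identity f_p′(x_p)·(x₁ + … + xₙ) = f₁(x₁) + … + fₙ(xₙ) holds for all x ∈ U, then F is constant on U (and in particular ∂F/∂xᵢ vanishes identically on U for every i, so F does not define a local n-quasigroup on U). -/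
/-!
Moving only the coordinate `xᵢ` (`i ≠ p`) leaves `f_p'(x_p)` unchanged, so differentiating the
identity in `xᵢ` gives `fᵢ'(xᵢ) = f_p'(x_p) =: c`. Hence the numerator `G = ∑ fᵢ(xᵢ)` and the
denominator `S = ∑ xᵢ` satisfy `G = c S` and `dG = c dS` at each point of `U`, so
`d(G/S) = (S dG - G dS)/S² = 0`, and a function with vanishing derivative on a connected open
set is constant.
-/

open Function

variable {𝕜 : Type*} [NontriviallyNormedField 𝕜]

theorem hasFDerivAt_sum_apply_s4 {ι : Type*} [Fintype ι] {f : ι → 𝕜 → 𝕜} {x : ι → 𝕜}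
    (hf : ∀ j, DifferentiableAt 𝕜 (f j) (x j)) :
    HasFDerivAt (fun y : ι → 𝕜 => ∑ j, f j (y j))
      (∑ j, deriv (f j) (x j) • ContinuousLinearMap.proj (R := 𝕜) (φ := fun _ : ι => 𝕜) j) x :=
  HasFDerivAt.fun_sum fun j _ => (hf j).hasDerivAt.comp_hasFDerivAt x (hasFDerivAt_apply j x)

theorem hasFDerivAt_div_zero_of_proportional {E : Type*} [NormedAddCommGroup E] [NormedSpace 𝕜 E]
    {g h : E → 𝕜} {h' : E →L[𝕜] 𝕜} {x : E} {c : 𝕜} (hg : HasFDerivAt g (c • h') x)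
    (hh : HasFDerivAt h h' x) (hx : h x ≠ 0) (hgx : g x = c * h x) :
    HasFDerivAt (fun y => g y / h y) (0 : E →L[𝕜] 𝕜) x := by
  have hinv : HasFDerivAt (fun y => (h y)⁻¹) (-(h x ^ 2)⁻¹ • h') x :=
    (hasDerivAt_inv hx).comp_hasFDerivAt x hh
  simp_rw [div_eq_mul_inv]
  refine (hg.fun_mul hinv).congr_fderiv ?_
  ext v
  simp only [hgx, add_apply, smul_apply, smul_eq_mul, zero_apply]
  field_simp
  ring

theorem deriv_apply_eq_of_deriv_mul_sum_eq {ι : Type*} [Fintype ι] [DecidableEq ι]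
    {f : ι → 𝕜 → 𝕜} (hf : ∀ j, Differentiable 𝕜 (f j)) {U : Set (ι → 𝕜)} (hU : IsOpen U)
    {p : ι} (hp : ∀ x ∈ U, deriv (f p) (x p) * ∑ j, x j = ∑ j, f j (x j))
    {x : ι → 𝕜} (hx : x ∈ U) (i : ι) : deriv (f i) (x i) = deriv (f p) (x p) := by
  rcases eq_or_ne i p with rfl | hip
  · rfl
  have hline := hasDerivAt_update x i (x i)
  have hnear : ∀ᶠ s in nhds (x i), update x i s ∈ U :=
    hline.continuousAt.preimage_mem_nhds (by rw [update_eq_self]; exact hU.mem_nhds hx)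
  have hS := (HasFDerivAt.fun_sum (u := Finset.univ) fun j _ =>
    hasFDerivAt_apply (𝕜 := 𝕜) j _).comp_hasDerivAt (x i) hline
  have hG := (hasFDerivAt_sum_apply_s4 fun j => hf j _).comp_hasDerivAt (x i) hline
  have heq : (fun s => deriv (f p) (x p) * ∑ j, update x i s j) =ᶠ[nhds (x i)]
      fun s => ∑ j, f j (update x i s j) := by
    filter_upwards [hnear] with s hs
    simpa [update_of_ne hip.symm] using hp _ hs
  have hderiv := ((hS.const_mul (deriv (f p) (x p))).congr_of_eventuallyEq heq.symm).unique hG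
  simpa [Pi.single_apply] using hderiv.symm

theorem stmt_4_general (n : ℕ)
    (f : Fin n → ℝ → ℝ) (hf : ∀ i, ContDiff ℝ 1 (f i))
    (U : Set (Fin n → ℝ)) (hUopen : IsOpen U) (hUconn : IsConnected U)
    (hden : ∀ x ∈ U, (∑ i, x i) ≠ 0)
    (F : (Fin n → ℝ) → ℝ)
    (hF : ∀ x, F x = (∑ i, f i (x i)) / (∑ i, x i))
    (p : Fin n)
    (hp : ∀ x ∈ U, deriv (f p) (x p) * (∑ i, x i) = ∑ i, f i (x i)) :
    (∃ C : ℝ, ∀ x ∈ U, F x = C) ∧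
      ∀ x ∈ U, ∀ i, fderiv ℝ F x (Pi.single i 1) = 0 := by
  have hfd : ∀ i, Differentiable ℝ (f i) := fun i => (hf i).differentiable one_ne_zero
  have hF_zero : ∀ x ∈ U, HasFDerivAt F (0 : (Fin n → ℝ) →L[ℝ] ℝ) x := by
    intro x hx
    rw [funext hF]
    refine hasFDerivAt_div_zero_of_proportional ?_
      (HasFDerivAt.fun_sum fun j _ => hasFDerivAt_apply j x) (hden x hx) (hp x hx).symm
    simpa only [deriv_apply_eq_of_deriv_mul_sum_eq hfd hUopen hp hx, Finset.smul_sum]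
      using hasFDerivAt_sum_apply_s4 fun j => hfd j (x j)
  have hF_fderiv : U.EqOn (fderiv ℝ F) 0 := fun x hx => (hF_zero x hx).fderiv
  exact ⟨hUopen.exists_is_const_of_fderiv_eq_zero hUconn.isPreconnected
    (fun x hx => (hF_zero x hx).differentiableAt.differentiableWithinAt) hF_fderiv,
    fun x hx i => by rw [hF_fderiv hx]; rfl⟩

/-- If on a nonempty connected open set `U` (with `x₁ + … + xₙ ≠ 0`)
the identity `f_p′(x_p)·(x₁ + … + xₙ) = f₁(x₁) + … + fₙ(xₙ)` holds for some fixed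
index `p`, then `F(x) = (f₁(x₁) + … + fₙ(xₙ))/(x₁ + … + xₙ)` is constant on `U`,
and in particular all partial derivatives of `F` vanish identically on `U`
(so `F` does not define a local `n`-quasigroup on `U`). -/
theorem stmt_4 (n : ℕ) (hn : 2 ≤ n)
    (f : Fin n → ℝ → ℝ) (hf : ∀ i, ContDiff ℝ 1 (f i))
    (U : Set (Fin n → ℝ)) (hUopen : IsOpen U) (hUconn : IsConnected U)
    (hden : ∀ x ∈ U, (∑ i, x i) ≠ 0)
    (F : (Fin n → ℝ) → ℝ)
    (hF : ∀ x, F x = (∑ i, f i (x i)) / (∑ i, x i))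
    (p : Fin n)
    (hp : ∀ x ∈ U, deriv (f p) (x p) * (∑ i, x i) = ∑ i, f i (x i)) :
    (∃ C : ℝ, ∀ x ∈ U, F x = C) ∧
      ∀ x ∈ U, ∀ i, fderiv ℝ F x (Pi.single i 1) = 0 :=
  stmt_4_general n f hf U hUopen hUconn hden F hF p hp
end

section
/- Let n ≥ 3 and 2 ≤ k ≤ n−1. Let U = I₁ × … × Iₙ ⊆ ℝⁿ be a product of open intervals and let F : U → ℝ be a C² function with ∂F/∂x_a ≠ 0 on U for all a ∈ {1,…,k}, satisfying on U the system F_{pa}·F_b = F_{pb}·F_a for all a, b ∈ {1,…,k} with a ≠ b and all p ∈ {k+1,…,n}. Then every point of U has an open neighborhood on which F admits a decomposition F(x₁,…,xₙ) = g(h(x₁,…,x_k), x_{k+1},…,xₙ) for some C² function h of k variables and some C² function g of n−k+1 variables; i.e., functions of the form (5) constitute the general solution of the system (6). -/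
/-!
On the convex set `U` the system says that every ratio `F_a / F_{i₀}` with `a` among the first
`k` coordinates has vanishing derivative in the remaining directions, so it does not depend on
the remaining coordinates: at two points with the same first `k` coordinates the partial
gradients `(F_a)_{a < k}` are proportional.

Freeze the remaining coordinates at those of `x₀` to get `h`, a function of the first `k`
coordinates, and straighten its level sets with the chart `Φ` that replaces the coordinate `i₀`
by `h`; it is a local diffeomorphism at `x₀` because `∂h/∂x_{i₀} ≠ 0`. For `a < k`, `a ≠ i₀`,
the vector `Φ'⁻¹ e_a` is tangent to a level set of `h` and lives in the first `k` coordinates,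
so by the proportionality `F ∘ Φ⁻¹` has vanishing `a`-th partial derivative. Hence near `Φ x₀`
the function `F ∘ Φ⁻¹` depends only on its `i₀`-th and its last `n - k` coordinates, which is
the decomposition `F = g(h, x_{k+1}, …, x_n)`; bump functions make `g` and `h` globally `C²`.
-/

open Set Filter Topology Function

theorem HasFDerivAt.div {E : Type*} [NormedAddCommGroup E] [NormedSpace ℝ E] {c d : E → ℝ}
    {c' d' : E →L[ℝ] ℝ} {x : E} (hc : HasFDerivAt c c' x) (hd : HasFDerivAt d d' x)
    (hx : d x ≠ 0) :
    HasFDerivAt (fun y => c y / d y) ((d x ^ 2)⁻¹ • (d x • c' - c x • d')) x := by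
  have h := hc.mul ((hasFDerivAt_inv hx).comp x hd)
  simp only [Function.comp_def] at h
  refine h.congr_fderiv ?_
  ext v
  simp only [add_apply, smul_apply, ContinuousLinearMap.comp_apply,
    ContinuousLinearMap.toSpanSingleton_apply, smul_eq_mul, sub_apply]
  field_simp
  ring

theorem Convex.apply_eq_of_hasFDerivAt_apply_sub_eq_zero
    {E G : Type*} [NormedAddCommGroup E] [NormedSpace ℝ E] [NormedAddCommGroup G]
    [NormedSpace ℝ G] {f : E → G} {f' : E → E →L[ℝ] G} {s : Set E} (hs : Convex ℝ s)
    (hf : ∀ z ∈ s, HasFDerivAt f (f' z) z) {x y : E} (hx : x ∈ s) (hy : y ∈ s)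
    (h : ∀ z ∈ s, f' z (x - y) = 0) : f x = f y := by
  have hseg : ∀ t ∈ Icc (0 : ℝ) 1, y + t • (x - y) ∈ s := fun t ht =>
    hs.add_smul_sub_mem hy hx ht
  have hderiv : ∀ t ∈ Icc (0 : ℝ) 1, HasDerivAt (fun t : ℝ => f (y + t • (x - y))) 0 t := by
    intro t ht
    have hline : HasDerivAt (fun t : ℝ => y + t • (x - y)) (x - y) t := by
      simpa using ((hasDerivAt_id t).smul_const (x - y)).const_add y
    have := (hf _ (hseg t ht)).comp_hasDerivAt t hline
    rwa [h _ (hseg t ht)] at this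
  have hconst := constant_of_has_deriv_right_zero
    (fun t ht => (hderiv t ht).continuousAt.continuousWithinAt)
    (fun t ht => (hderiv t (Ico_subset_Icc_self ht)).hasDerivWithinAt) 1 (by simp)
  simpa using hconst

theorem ContDiffAt.exists_contDiff_eventuallyEq {E G : Type*} [NormedAddCommGroup E]
    [NormedSpace ℝ E] [FiniteDimensional ℝ E] [NormedAddCommGroup G] [NormedSpace ℝ G]
    {n : ℕ} {f : E → G} {a : E} (hf : ContDiffAt ℝ n f a) :
    ∃ g : E → G, ContDiff ℝ n g ∧ g =ᶠ[𝓝 a] f := by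
  obtain ⟨u, hu, hfu⟩ := hf.contDiffOn le_rfl (by simp)
  obtain ⟨ε, hε, hball⟩ := Metric.mem_nhds_iff.1 (interior_mem_nhds.2 hu)
  let φ : ContDiffBump a := ⟨ε / 4, ε / 2, by positivity, by linarith⟩
  refine ⟨fun x => φ x • f x, contDiff_iff_contDiffAt.2 fun x => ?_, ?_⟩
  · by_cases hx : x ∈ tsupport φ
    · rw [φ.tsupport_eq] at hx
      have hxu : x ∈ interior u := hball (Metric.closedBall_subset_ball (half_lt_self hε) hx)
      exact φ.contDiff.contDiffAt.smul
        ((hfu.mono interior_subset).contDiffAt (isOpen_interior.mem_nhds hxu))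
    · refine (contDiffAt_const (c := (0 : G))).congr_of_eventuallyEq ?_
      filter_upwards [notMem_tsupport_iff_eventuallyEq.1 hx] with y hy
      simp [hy]
  · filter_upwards [Metric.closedBall_mem_nhds a (by positivity : (0 : ℝ) < ε / 4)] with x hx
    rw [φ.one_of_mem_closedBall hx, one_smul]

section Coordinates

variable {ι : Type*}

theorem ContinuousLinearMap.apply_eq_sum_smul_apply_single [Fintype ι] [DecidableEq ι]
    {G : Type*} [NormedAddCommGroup G] [NormedSpace ℝ G] (L : (ι → ℝ) →L[ℝ] G) (v : ι → ℝ) :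
    L v = ∑ i, v i • L (Pi.single i 1) := by
  conv_lhs => rw [pi_eq_sum_univ' v]
  simp only [map_sum, map_smul]

theorem ContinuousLinearMap.apply_eq_zero_of_apply_single_eq_zero [Fintype ι] [DecidableEq ι]
    {G : Type*} [NormedAddCommGroup G] [NormedSpace ℝ G] (L : (ι → ℝ) →L[ℝ] G) {v : ι → ℝ}
    (h : ∀ i, v i ≠ 0 → L (Pi.single i 1) = 0) : L v = 0 := by
  rw [L.apply_eq_sum_smul_apply_single]
  refine Finset.sum_eq_zero fun i _ => ?_
  by_cases hi : v i = 0 <;> simp [hi, h i]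

theorem Convex.apply_eq_of_hasFDerivAt_apply_single_eq_zero [Fintype ι] [DecidableEq ι]
    {G : Type*} [NormedAddCommGroup G] [NormedSpace ℝ G] {f : (ι → ℝ) → G}
    {f' : (ι → ℝ) → (ι → ℝ) →L[ℝ] G} {s : Set (ι → ℝ)} (hs : Convex ℝ s)
    (hf : ∀ z ∈ s, HasFDerivAt f (f' z) z) {x y : ι → ℝ} (hx : x ∈ s) (hy : y ∈ s)
    (h : ∀ z ∈ s, ∀ i, x i ≠ y i → f' z (Pi.single i 1) = 0) : f x = f y :=
  hs.apply_eq_of_hasFDerivAt_apply_sub_eq_zero hf hx hy fun z hz =>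
    (f' z).apply_eq_zero_of_apply_single_eq_zero fun i hi => h z hz i (sub_ne_zero.1 hi)

theorem contDiff_dite_reindex [Fintype ι] {κ : Type*} [Fintype κ] {n : WithTop ℕ∞}
    (p : ι → Prop) [DecidablePred p] (σ : ∀ i, p i → κ) (x : ι → ℝ) :
    ContDiff ℝ n fun (u : κ → ℝ) (i : ι) => if hi : p i then u (σ i hi) else x i := by
  refine contDiff_pi.2 fun i => ?_
  by_cases hi : p i
  · simpa [hi] using contDiff_apply ℝ ℝ (σ i hi)
  · simpa [hi] using contDiff_const

noncomputable def updateCLM [DecidableEq ι] (i : ι) (ℓ : (ι → ℝ) →L[ℝ] ℝ) :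
    (ι → ℝ) →L[ℝ] ι → ℝ :=
  ContinuousLinearMap.pi fun j => if j = i then ℓ else ContinuousLinearMap.proj j

@[simp]
theorem updateCLM_apply [DecidableEq ι] (i : ι) (ℓ : (ι → ℝ) →L[ℝ] ℝ) (v : ι → ℝ) :
    updateCLM i ℓ v = update v i (ℓ v) := by
  ext j
  by_cases h : j = i <;> simp [updateCLM, h]

theorem updateCLM_injective [DecidableEq ι] {i : ι} {ℓ : (ι → ℝ) →L[ℝ] ℝ}
    (h : ℓ (Pi.single i 1) ≠ 0) : Injective (updateCLM i ℓ) := by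
  refine (injective_iff_map_eq_zero _).2 fun v hv => ?_
  have hoff : ∀ j ≠ i, v j = 0 := fun j hj => by simpa [hj] using congrFun hv j
  have hv_eq : v = v i • Pi.single i 1 := by
    ext j
    by_cases hj : j = i
    · simp [hj]
    · simp [hj, hoff j hj]
  have hℓ : ℓ v = 0 := by simpa using congrFun hv i
  rw [hv_eq, map_smul, smul_eq_mul, mul_eq_zero] at hℓ
  rw [hv_eq, hℓ.resolve_right h, zero_smul]

noncomputable def updateCLMEquiv [Fintype ι] [DecidableEq ι] {i : ι} {ℓ : (ι → ℝ) →L[ℝ] ℝ}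
    (h : ℓ (Pi.single i 1) ≠ 0) : (ι → ℝ) ≃L[ℝ] ι → ℝ :=
  (LinearEquiv.ofInjectiveEndo _ (updateCLM_injective h)).toContinuousLinearEquiv

@[simp]
theorem coe_updateCLMEquiv [Fintype ι] [DecidableEq ι] {i : ι} {ℓ : (ι → ℝ) →L[ℝ] ℝ}
    (h : ℓ (Pi.single i 1) ≠ 0) :
    (updateCLMEquiv h : (ι → ℝ) →L[ℝ] ι → ℝ) = updateCLM i ℓ :=
  rfl

@[simp]
theorem updateCLMEquiv_apply [Fintype ι] [DecidableEq ι] {i : ι} {ℓ : (ι → ℝ) →L[ℝ] ℝ}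
    (h : ℓ (Pi.single i 1) ≠ 0) (v : ι → ℝ) : updateCLMEquiv h v = update v i (ℓ v) :=
  updateCLM_apply i ℓ v

theorem HasFDerivAt.id_update [Fintype ι] [DecidableEq ι] {G : (ι → ℝ) → ℝ}
    {ℓ : (ι → ℝ) →L[ℝ] ℝ} {x : ι → ℝ} (hG : HasFDerivAt G ℓ x) (i : ι) :
    HasFDerivAt (fun z => update z i (G z)) (updateCLM i ℓ) x := by
  have hcomp : (fun z => update z i (G z)) = fun z j => if j = i then G z else z j := by
    ext z j
    exact update_apply _ _ _ _
  rw [hcomp, updateCLM]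
  refine hasFDerivAt_pi.2 fun j => ?_
  by_cases hj : j = i
  · simpa [hj] using hG
  · simpa [hj] using hasFDerivAt_apply j x

theorem ContDiffAt.id_update [Fintype ι] [DecidableEq ι] {n : WithTop ℕ∞} {G : (ι → ℝ) → ℝ}
    {x : ι → ℝ} (hG : ContDiffAt ℝ n G x) (i : ι) :
    ContDiffAt ℝ n (fun z => update z i (G z)) x := by
  refine contDiffAt_pi.2 fun j => ?_
  by_cases hj : j = i
  · simpa [hj] using hG
  · simpa [hj] using (contDiff_apply ℝ ℝ j).contDiffAt

noncomputable def indicatorCLM (S : Set ι) [DecidablePred (· ∈ S)] : (ι → ℝ) →L[ℝ] ι → ℝ :=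
  ContinuousLinearMap.pi fun i => if i ∈ S then ContinuousLinearMap.proj i else 0

@[simp]
theorem indicatorCLM_apply (S : Set ι) [DecidablePred (· ∈ S)] (v : ι → ℝ) :
    indicatorCLM S v = S.indicator v := by
  ext i
  by_cases h : i ∈ S <;> simp [indicatorCLM, h]

theorem hasFDerivAt_piecewise_left [Fintype ι] (S : Set ι) [DecidablePred (· ∈ S)]
    (x z : ι → ℝ) : HasFDerivAt (fun z => S.piecewise z x) (indicatorCLM S) z := by
  refine hasFDerivAt_pi.2 fun i => ?_
  by_cases h : i ∈ S
  · simpa [h] using hasFDerivAt_apply i z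
  · simpa [h] using hasFDerivAt_const (x i) z

theorem ContDiff.piecewise_pi [Fintype ι] {S : Set ι} [DecidablePred (· ∈ S)] {E : Type*}
    [NormedAddCommGroup E] [NormedSpace ℝ E] {n : WithTop ℕ∞} {f g : E → ι → ℝ}
    (hf : ContDiff ℝ n f) (hg : ContDiff ℝ n g) :
    ContDiff ℝ n fun x => S.piecewise (f x) (g x) := by
  refine contDiff_pi.2 fun i => ?_
  by_cases hi : i ∈ S
  · simpa [hi] using contDiff_pi.1 hf i
  · simpa [hi] using contDiff_pi.1 hg i

end Coordinates

section PartialRatios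

variable {ι : Type*} [Fintype ι] [DecidableEq ι] {U : Set (ι → ℝ)} {F : (ι → ℝ) → ℝ}
  {S : Set ι}

theorem ContDiffOn.hasFDerivAt_partial (hUo : IsOpen U) (hF : ContDiffOn ℝ 2 F U) (a : ι)
    {x : ι → ℝ} (hx : x ∈ U) :
    HasFDerivAt (fun y => fderiv ℝ F y (Pi.single a 1))
      (fderiv ℝ (fun y => fderiv ℝ F y (Pi.single a 1)) x) x := by
  have hFa : ContDiffOn ℝ 1 (fun y => fderiv ℝ F y (Pi.single a 1)) U :=
    (hF.fderiv_of_isOpen hUo (by norm_num)).clm_apply contDiffOn_const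
  exact ((hFa.differentiableOn one_ne_zero).differentiableAt (hUo.mem_nhds hx)).hasFDerivAt

theorem partial_mul_partial_comm_of_eqOn (hUo : IsOpen U) (hUc : Convex ℝ U)
    (hF : ContDiffOn ℝ 2 F U) {a b : ι} (hb : ∀ x ∈ U, fderiv ℝ F x (Pi.single b 1) ≠ 0)
    (hpde : ∀ x ∈ U, ∀ p ∉ S,
      fderiv ℝ (fun y => fderiv ℝ F y (Pi.single a 1)) x (Pi.single p 1) *
          fderiv ℝ F x (Pi.single b 1) =
        fderiv ℝ (fun y => fderiv ℝ F y (Pi.single b 1)) x (Pi.single p 1) *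
          fderiv ℝ F x (Pi.single a 1))
    {y z : ι → ℝ} (hy : y ∈ U) (hz : z ∈ U) (hyz : ∀ i ∈ S, y i = z i) :
    fderiv ℝ F y (Pi.single a 1) * fderiv ℝ F z (Pi.single b 1) =
      fderiv ℝ F y (Pi.single b 1) * fderiv ℝ F z (Pi.single a 1) := by
  have hratio : fderiv ℝ F y (Pi.single a 1) / fderiv ℝ F y (Pi.single b 1) =
      fderiv ℝ F z (Pi.single a 1) / fderiv ℝ F z (Pi.single b 1) := by
    refine hUc.apply_eq_of_hasFDerivAt_apply_single_eq_zero
      (fun w hw => (hF.hasFDerivAt_partial hUo a hw).div (hF.hasFDerivAt_partial hUo b hw)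
        (hb w hw)) hy hz fun w hw p hp => ?_
    have hpS : p ∉ S := fun h => hp (hyz p h)
    simp only [smul_apply, sub_apply, smul_eq_mul]
    rw [mul_comm (fderiv ℝ F w (Pi.single b 1)), hpde w hw p hpS]
    ring
  rw [div_eq_div_iff (hb y hy) (hb z hz)] at hratio
  linear_combination hratio

theorem fderiv_apply_eq_zero_of_eqOn (hUo : IsOpen U) (hUc : Convex ℝ U)
    (hF : ContDiffOn ℝ 2 F U) {b : ι} (hb : ∀ x ∈ U, fderiv ℝ F x (Pi.single b 1) ≠ 0)
    (hpde : ∀ x ∈ U, ∀ a ∈ S, a ≠ b → ∀ p ∉ S,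
      fderiv ℝ (fun y => fderiv ℝ F y (Pi.single a 1)) x (Pi.single p 1) *
          fderiv ℝ F x (Pi.single b 1) =
        fderiv ℝ (fun y => fderiv ℝ F y (Pi.single b 1)) x (Pi.single p 1) *
          fderiv ℝ F x (Pi.single a 1))
    {y z : ι → ℝ} (hy : y ∈ U) (hz : z ∈ U) (hyz : ∀ i ∈ S, y i = z i) {d : ι → ℝ}
    (hd : support d ⊆ S) (hzd : fderiv ℝ F z d = 0) : fderiv ℝ F y d = 0 := by
  have hcross : fderiv ℝ F y d * fderiv ℝ F z (Pi.single b 1) =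
      fderiv ℝ F y (Pi.single b 1) * fderiv ℝ F z d := by
    simp only [(fderiv ℝ F _).apply_eq_sum_smul_apply_single d, smul_eq_mul, Finset.sum_mul,
      Finset.mul_sum]
    refine Finset.sum_congr rfl fun a _ => ?_
    by_cases ha : a ∈ S
    · rcases eq_or_ne a b with rfl | hab
      · ring
      · have := partial_mul_partial_comm_of_eqOn hUo hUc hF hb
          (fun x hx p hp => hpde x hx a ha hab p hp) hy hz hyz
        linear_combination d a * this
    · simp [notMem_support.1 fun h => ha (hd h)]
  rw [hzd, mul_zero, mul_eq_zero] at hcross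
  exact hcross.resolve_right (hb z hz)

end PartialRatios

section Reduction

variable {ι : Type*} [DecidableEq ι]

/-- The chart `Φ` of the proof; `F (S.piecewise z x₀)` is the function `h` of the decomposition. -/
noncomputable def levelChart (S : Set ι) [DecidablePred (· ∈ S)] (i₀ : ι) (F : (ι → ℝ) → ℝ)
    (x₀ z : ι → ℝ) : ι → ℝ :=
  update z i₀ (F (S.piecewise z x₀))

/-- A point with the same `i₀`-th coordinate and the same coordinates outside `S` as
`levelChart S i₀ F x₀ y`, but with the other coordinates in `S` taken from `x₀`. -/
noncomputable def levelPoint (S : Set ι) [DecidablePred (· ∈ S)] (i₀ : ι) (F : (ι → ℝ) → ℝ)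
    (x₀ y : ι → ℝ) : ι → ℝ :=
  update (S.piecewise x₀ y) i₀ (F (S.piecewise y x₀))

theorem levelChart_self (S : Set ι) [DecidablePred (· ∈ S)] (i₀ : ι) (F : (ι → ℝ) → ℝ)
    (x₀ : ι → ℝ) : levelChart S i₀ F x₀ x₀ = update x₀ i₀ (F x₀) := by
  simp [levelChart]

theorem levelPoint_self (S : Set ι) [DecidablePred (· ∈ S)] (i₀ : ι) (F : (ι → ℝ) → ℝ)
    (x₀ : ι → ℝ) : levelPoint S i₀ F x₀ x₀ = update x₀ i₀ (F x₀) := by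
  simp [levelPoint]

variable [Fintype ι]

/-- The setting of the theorem, with a set `S` of coordinates in place of the first `k` ones and
a fixed `i₀ ∈ S`; a product of open intervals satisfies the three conditions on `U`. -/
structure ReductionHypotheses (U : Set (ι → ℝ)) (S : Set ι) [DecidablePred (· ∈ S)] (i₀ : ι)
    (F : (ι → ℝ) → ℝ) : Prop where
  isOpen : IsOpen U
  convex : Convex ℝ U
  piecewise_mem : ∀ y ∈ U, ∀ z ∈ U, S.piecewise y z ∈ U
  contDiffOn : ContDiffOn ℝ 2 F U
  mem : i₀ ∈ S
  partial_ne_zero : ∀ x ∈ U, fderiv ℝ F x (Pi.single i₀ 1) ≠ 0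
  pde : ∀ x ∈ U, ∀ a ∈ S, a ≠ i₀ → ∀ p ∉ S,
    fderiv ℝ (fun y => fderiv ℝ F y (Pi.single a 1)) x (Pi.single p 1) *
        fderiv ℝ F x (Pi.single i₀ 1) =
      fderiv ℝ (fun y => fderiv ℝ F y (Pi.single i₀ 1)) x (Pi.single p 1) *
        fderiv ℝ F x (Pi.single a 1)

variable {S : Set ι} [DecidablePred (· ∈ S)]

theorem continuousAt_levelPoint {i₀ : ι} {F : (ι → ℝ) → ℝ} {x₀ : ι → ℝ}
    (hF : ContinuousAt F x₀) : ContinuousAt (levelPoint S i₀ F x₀) x₀ :=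
  (contDiff_const.piecewise_pi (n := 0) contDiff_id).continuous.continuousAt.update i₀
    (ContinuousAt.comp (f := fun y => S.piecewise y x₀) (by rwa [piecewise_same])
      (contDiff_id.piecewise_pi (n := 0) contDiff_const).continuous.continuousAt)

namespace ReductionHypotheses

variable {U : Set (ι → ℝ)} {i₀ : ι} {F : (ι → ℝ) → ℝ} {x₀ : ι → ℝ}

theorem contDiffAt (hyp : ReductionHypotheses U S i₀ F) {z : ι → ℝ} (hz : z ∈ U) :
    ContDiffAt ℝ 2 F z :=
  hyp.contDiffOn.contDiffAt (hyp.isOpen.mem_nhds hz)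

theorem contDiffAt_levelChart (hyp : ReductionHypotheses U S i₀ F) (hx₀ : x₀ ∈ U)
    {z : ι → ℝ} (hz : z ∈ U) : ContDiffAt ℝ 2 (levelChart S i₀ F x₀) z :=
  ((hyp.contDiffAt (hyp.piecewise_mem z hz x₀ hx₀)).comp z
    (contDiff_id.piecewise_pi contDiff_const).contDiffAt).id_update i₀

theorem hasFDerivAt_levelChart (hyp : ReductionHypotheses U S i₀ F) (hx₀ : x₀ ∈ U)
    {z : ι → ℝ} (hz : z ∈ U) :
    ∃ A : (ι → ℝ) ≃L[ℝ] ι → ℝ,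
      HasFDerivAt (levelChart S i₀ F x₀) (A : (ι → ℝ) →L[ℝ] ι → ℝ) z ∧
        ∀ v, A v = update v i₀ (fderiv ℝ F (S.piecewise z x₀) (S.indicator v)) := by
  set ℓ := (fderiv ℝ F (S.piecewise z x₀)).comp (indicatorCLM S)
  have hℓ : ℓ (Pi.single i₀ 1) ≠ 0 := by
    have hsingle : S.indicator (Pi.single i₀ 1 : ι → ℝ) = Pi.single i₀ 1 :=
      indicator_eq_self.2 fun i hi => by_contra fun hiS =>
        hi (Pi.single_eq_of_ne (by rintro rfl; exact hiS hyp.mem) _)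
    simpa [ℓ, hsingle] using hyp.partial_ne_zero _ (hyp.piecewise_mem z hz x₀ hx₀)
  refine ⟨updateCLMEquiv hℓ, ?_, fun v => by simp [ℓ]⟩
  rw [coe_updateCLMEquiv]
  exact (((hyp.contDiffAt (hyp.piecewise_mem z hz x₀ hx₀)).differentiableAt
    (by norm_num)).hasFDerivAt.comp z (hasFDerivAt_piecewise_left S x₀ z)).id_update i₀

theorem differentiableAt_comp_symm_and_partial_eq_zero (hyp : ReductionHypotheses U S i₀ F)
    (hx₀ : x₀ ∈ U) (e : OpenPartialHomeomorph (ι → ℝ) (ι → ℝ))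
    (he : ⇑e = levelChart S i₀ F x₀) {w : ι → ℝ} (hw : w ∈ e.target) (hwU : e.symm w ∈ U) :
    DifferentiableAt ℝ (F ∘ e.symm) w ∧
      ∀ a ∈ S, a ≠ i₀ → fderiv ℝ (F ∘ e.symm) w (Pi.single a 1) = 0 := by
  set z := e.symm w
  obtain ⟨A, hA, hAapp⟩ := hyp.hasFDerivAt_levelChart hx₀ hwU
  have hcomp :
      HasFDerivAt (F ∘ e.symm) ((fderiv ℝ F z).comp (A.symm : (ι → ℝ) →L[ℝ] ι → ℝ)) w :=
    ((hyp.contDiffAt hwU).differentiableAt (by norm_num)).hasFDerivAt.comp w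
      (e.hasFDerivAt_symm hw (he ▸ hA))
  refine ⟨hcomp.differentiableAt, fun a ha hai => ?_⟩
  rw [hcomp.fderiv]
  set d := A.symm (Pi.single a 1)
  have hAd : update d i₀ (fderiv ℝ F (S.piecewise z x₀) (S.indicator d)) = Pi.single a 1 := by
    rw [← hAapp, A.apply_symm_apply]
  have hdS : support d ⊆ S := fun j hj => by
    by_contra hjS
    have hji : j ≠ i₀ := fun h => hjS (h ▸ hyp.mem)
    have hja : j ≠ a := fun h => hjS (h ▸ ha)
    exact hj (by simpa [hji, hja] using congrFun hAd j)
  have hlevel : fderiv ℝ F (S.piecewise z x₀) d = 0 := by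
    simpa [indicator_eq_self.2 hdS, Ne.symm hai] using congrFun hAd i₀
  exact fderiv_apply_eq_zero_of_eqOn hyp.isOpen hyp.convex hyp.contDiffOn hyp.partial_ne_zero
    hyp.pde hwU (hyp.piecewise_mem z hwU x₀ hx₀)
    (fun i hi => (piecewise_eq_of_mem _ _ _ hi).symm) hdS hlevel

theorem comp_symm_eq_of_eqOn (hyp : ReductionHypotheses U S i₀ F) (hx₀ : x₀ ∈ U)
    (e : OpenPartialHomeomorph (ι → ℝ) (ι → ℝ)) (he : ⇑e = levelChart S i₀ F x₀)
    {B : Set (ι → ℝ)} (hBc : Convex ℝ B) (hB : B ⊆ e.target ∩ e.symm ⁻¹' U) {w w' : ι → ℝ}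
    (hw : w ∈ B) (hw' : w' ∈ B) (hww' : ∀ j, w j ≠ w' j → j ∈ S ∧ j ≠ i₀) :
    F (e.symm w) = F (e.symm w') :=
  hBc.apply_eq_of_hasFDerivAt_apply_single_eq_zero (f := F ∘ e.symm)
    (fun _ hv => (hyp.differentiableAt_comp_symm_and_partial_eq_zero hx₀ e he (hB hv).1
      (hB hv).2).1.hasFDerivAt)
    hw hw' fun _ hv j hj =>
      (hyp.differentiableAt_comp_symm_and_partial_eq_zero hx₀ e he (hB hv).1 (hB hv).2).2 j
        (hww' j hj).1 (hww' j hj).2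

theorem exists_contDiffAt_eventually_eq (hyp : ReductionHypotheses U S i₀ F) (hx₀ : x₀ ∈ U) :
    ∃ G : (ι → ℝ) → ℝ, ContDiffAt ℝ 2 G (update x₀ i₀ (F x₀)) ∧
      ∀ᶠ y in 𝓝 x₀, F y = G (levelPoint S i₀ F x₀ y) := by
  obtain ⟨A, hA, -⟩ := hyp.hasFDerivAt_levelChart hx₀ hx₀
  have hchart := hyp.contDiffAt_levelChart hx₀ hx₀
  let e := hchart.toOpenPartialHomeomorph _ hA two_ne_zero
  have hx₀e : x₀ ∈ e.source := hchart.mem_toOpenPartialHomeomorph_source hA two_ne_zero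
  have htarget : update x₀ i₀ (F x₀) ∈ e.target :=
    levelChart_self S i₀ F x₀ ▸ e.map_source hx₀e
  have hsymm : e.symm (update x₀ i₀ (F x₀)) = x₀ := levelChart_self S i₀ F x₀ ▸ e.left_inv hx₀e
  obtain ⟨r, hr, hball⟩ := Metric.isOpen_iff.1 (e.isOpen_inter_preimage_symm hyp.isOpen) _
    ⟨htarget, by rw [mem_preimage, hsymm]; exact hx₀⟩
  refine ⟨F ∘ e.symm, ?_, ?_⟩
  · have hA' : HasFDerivAt e (A : (ι → ℝ) →L[ℝ] ι → ℝ) (e.symm (update x₀ i₀ (F x₀))) := by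
      rw [hsymm]; exact hA
    have hchart' : ContDiffAt ℝ 2 e (e.symm (update x₀ i₀ (F x₀))) := by
      rw [hsymm]; exact hchart
    have hF : ContDiffAt ℝ 2 F (e.symm (update x₀ i₀ (F x₀))) := by
      rw [hsymm]; exact hyp.contDiffAt hx₀
    exact hF.comp _ (e.contDiffAt_symm htarget hA' hchart')
  have hB := Metric.ball_mem_nhds (update x₀ i₀ (F x₀)) hr
  have hchartB : ∀ᶠ y in 𝓝 x₀, levelChart S i₀ F x₀ y ∈ Metric.ball (update x₀ i₀ (F x₀)) r :=
    hchart.continuousAt (by rwa [levelChart_self])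
  have hpointB : ∀ᶠ y in 𝓝 x₀, levelPoint S i₀ F x₀ y ∈ Metric.ball (update x₀ i₀ (F x₀)) r :=
    continuousAt_levelPoint (hyp.contDiffAt hx₀).continuousAt (by rwa [levelPoint_self])
  filter_upwards [e.open_source.mem_nhds hx₀e, hchartB, hpointB] with y hys hyB hpB
  refine (congrArg F (e.left_inv hys)).symm.trans
    (hyp.comp_symm_eq_of_eqOn hx₀ e rfl (convex_ball _ _) hball hyB hpB fun j hj => ?_)
  by_cases hji : j = i₀
  · subst hji
    simp [e, levelChart, levelPoint] at hj
  · refine ⟨by_contra fun hjS => hj ?_, hji⟩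
    simp [e, levelChart, levelPoint, hji, hjS]

theorem exists_contDiff_eventually_eq (hyp : ReductionHypotheses U S i₀ F) (hx₀ : x₀ ∈ U) :
    ∃ (h : (ι → ℝ) → ℝ) (g : ℝ × (ι → ℝ) → ℝ), ContDiff ℝ 2 h ∧ ContDiff ℝ 2 g ∧
      ∀ᶠ y in 𝓝 x₀, F y = g (h (S.piecewise y x₀), S.piecewise x₀ y) := by
  obtain ⟨G, hG, hFG⟩ := hyp.exists_contDiffAt_eventually_eq hx₀
  obtain ⟨h, hh, hhF⟩ := (hyp.contDiffAt hx₀).exists_contDiff_eventuallyEq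
  obtain ⟨g, hg, hgG⟩ := hG.exists_contDiff_eventuallyEq
  have hupdate : ContDiff ℝ 2 fun p : ℝ × (ι → ℝ) => update p.2 i₀ p.1 := by
    refine contDiff_pi.2 fun j => ?_
    by_cases hj : j = i₀
    · simpa [hj] using contDiff_fst
    · simp only [update_of_ne hj]
      exact (contDiff_apply ℝ ℝ j).comp contDiff_snd
  refine ⟨h, fun p => g (update p.2 i₀ p.1), hh, hg.comp hupdate, ?_⟩
  have hpiecewise : Tendsto (fun y => S.piecewise y x₀) (𝓝 x₀) (𝓝 x₀) := by
    simpa using (contDiff_id.piecewise_pi (S := S) (n := 0)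
      (contDiff_const (c := x₀))).continuous.tendsto x₀
  have hpoint : Tendsto (levelPoint S i₀ F x₀) (𝓝 x₀) (𝓝 (update x₀ i₀ (F x₀))) := by
    simpa [levelPoint_self] using
      (continuousAt_levelPoint (hyp.contDiffAt hx₀).continuousAt).tendsto
  filter_upwards [hFG, hpiecewise.eventually hhF, hpoint.eventually hgG] with y hFy hhy hgy
  rw [hFy, hhy, ← hgy]
  rfl

end ReductionHypotheses

end Reduction

/-- If a C² function `F` on a product `U = I₁ × … × Iₙ` of open
intervals has `∂F/∂x_a ≠ 0` on `U` for `a ∈ {1,…,k}` and satisfies the system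
`F_{pa}·F_b = F_{pb}·F_a` (distinct `a, b ∈ {1,…,k}`, `p ∈ {k+1,…,n}`) on `U`,
then every point of `U` has an open neighborhood on which `F` admits a
`(1,k)`-reducibility `F(x₁,…,xₙ) = g(h(x₁,…,x_k), x_{k+1},…,xₙ)` with C²
functions `h` and `g`. -/
theorem stmt_6 (n k : ℕ) (hk2 : 2 ≤ k) (hkn : k ≤ n - 1)
    (I : Fin n → Set ℝ) (hIopen : ∀ i, IsOpen (I i))
    (hIconn : ∀ i, (I i).OrdConnected)
    (U : Set (Fin n → ℝ)) (hU : U = {x | ∀ i, x i ∈ I i})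
    (F : (Fin n → ℝ) → ℝ) (hFsm : ContDiffOn ℝ 2 F U)
    (hnz : ∀ x ∈ U, ∀ a : Fin n, a.1 < k → fderiv ℝ F x (Pi.single a 1) ≠ 0)
    (hpde : ∀ x ∈ U, ∀ a b : Fin n, a.1 < k → b.1 < k → a ≠ b →
      ∀ p : Fin n, k ≤ p.1 →
        fderiv ℝ (fun y => fderiv ℝ F y (Pi.single a 1)) x (Pi.single p 1) *
            fderiv ℝ F x (Pi.single b 1) =
          fderiv ℝ (fun y => fderiv ℝ F y (Pi.single b 1)) x (Pi.single p 1) *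
            fderiv ℝ F x (Pi.single a 1)) :
    ∀ x ∈ U, ∃ V : Set (Fin n → ℝ), IsOpen V ∧ x ∈ V ∧ V ⊆ U ∧
      ∃ (h : (Fin k → ℝ) → ℝ) (g : ℝ × (Fin (n - k) → ℝ) → ℝ),
        ContDiff ℝ 2 h ∧ ContDiff ℝ 2 g ∧
        ∀ y ∈ V, F y = g (h (fun i => y (Fin.castLE (by omega) i)),
          fun j => y ⟨k + j.1, by have := j.2; omega⟩) := by
  intro x₀ hx₀
  have hUpi : U = univ.pi I := by ext; simp [hU]
  have hk : 0 < k := by omega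
  have hyp : ReductionHypotheses U {i : Fin n | i.1 < k} ⟨0, by omega⟩ F :=
    { isOpen := hUpi ▸ isOpen_set_pi finite_univ fun i _ => hIopen i
      convex := hUpi ▸ convex_pi fun i _ => (hIconn i).convex
      piecewise_mem := fun y hy z hz => hUpi ▸ piecewise_mem_pi _ (hUpi ▸ hy) (hUpi ▸ hz)
      contDiffOn := hFsm
      mem := hk
      partial_ne_zero := fun x hx => hnz x hx _ hk
      pde := fun x hx a ha hai p hp => hpde x hx a _ ha hk hai p (not_lt.1 hp) }
  obtain ⟨h, g, hh, hg, hev⟩ := hyp.exists_contDiff_eventually_eq hx₀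
  obtain ⟨V, hV, hVo, hx₀V⟩ := eventually_nhds_iff.1 hev
  refine ⟨V ∩ U, hVo.inter hyp.isOpen, ⟨hx₀V, hx₀⟩, inter_subset_right,
    fun u => h fun i => if hi : i.1 < k then u ⟨i, hi⟩ else x₀ i,
    fun p => g (p.1, fun i => if hi : k ≤ i.1 then p.2 ⟨i - k, by omega⟩ else x₀ i),
    hh.comp (contDiff_dite_reindex _ _ x₀),
    hg.comp (contDiff_fst.prodMk ((contDiff_dite_reindex _ _ x₀).comp contDiff_snd)),
    fun y hy => ?_⟩
  rw [hV y hy.1]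
  congr
  ext i
  by_cases hi : k ≤ i.1
  · simp [piecewise, not_lt.2 hi, hi, Nat.add_sub_cancel' hi]
  · simp [piecewise, not_le.1 hi, hi]
end
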